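/- arXiv:2012.01453 — 2 statements merged into one kernel-verified Lean document; each statement's English description precedes it below -/
import Mathlib

section
/- For integers s ≥ 1 and n ≥ 1, the number of ~-equivalence classes of strings of length n over Σ = {m ∈ ℤ : |m| ≤ s} equals Σ_{k=0}^{n} |T_k|, where |T_k| is the number of strings of length k over Σ_* = Σ \ {0} in which no positive letter m is immediately followed by −m. -/
open Finset

/-- The alphabet `Σ = {m ∈ ℤ : |m| ≤ s}`. -/
abbrev SpinLetter (s : ℕ) := {m : ℤ // m ∈ Finset.Icc (-(s : ℤ)) (s : ℤ)}

/-- Strings of length `n` over `Σ`. -/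
abbrev SpinStr (s n : ℕ) := Fin n → SpinLetter s

/-- The single-move relation `R`: exchange `0m ↔ m0` for `m ∈ Σ_*`, or
create/annihilate `00 ↔ m(−m)` for `m ∈ {1,…,s}`, at adjacent positions `k, k+1`. -/
def MoveRel (s n : ℕ) (u v : SpinStr s n) : Prop :=
  ∃ k : ℕ, ∃ hk1 : k + 1 < n,
    (∀ i : Fin n, (i : ℕ) ≠ k → (i : ℕ) ≠ k + 1 → u i = v i) ∧
    ((∃ m : ℤ, m ≠ 0 ∧ |m| ≤ (s : ℤ) ∧
        (((u ⟨k, Nat.lt_of_succ_lt hk1⟩ : ℤ) = 0 ∧ (u ⟨k + 1, hk1⟩ : ℤ) = m ∧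
          (v ⟨k, Nat.lt_of_succ_lt hk1⟩ : ℤ) = m ∧ (v ⟨k + 1, hk1⟩ : ℤ) = 0) ∨
         ((u ⟨k, Nat.lt_of_succ_lt hk1⟩ : ℤ) = m ∧ (u ⟨k + 1, hk1⟩ : ℤ) = 0 ∧
          (v ⟨k, Nat.lt_of_succ_lt hk1⟩ : ℤ) = 0 ∧ (v ⟨k + 1, hk1⟩ : ℤ) = m))) ∨
     (∃ m : ℤ, 1 ≤ m ∧ m ≤ (s : ℤ) ∧
        (((u ⟨k, Nat.lt_of_succ_lt hk1⟩ : ℤ) = 0 ∧ (u ⟨k + 1, hk1⟩ : ℤ) = 0 ∧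
          (v ⟨k, Nat.lt_of_succ_lt hk1⟩ : ℤ) = m ∧ (v ⟨k + 1, hk1⟩ : ℤ) = -m) ∨
         ((u ⟨k, Nat.lt_of_succ_lt hk1⟩ : ℤ) = m ∧ (u ⟨k + 1, hk1⟩ : ℤ) = -m ∧
          (v ⟨k, Nat.lt_of_succ_lt hk1⟩ : ℤ) = 0 ∧ (v ⟨k + 1, hk1⟩ : ℤ) = 0))))

/-- `T_k`: the set of strings `t : Fin k → ℤ` with all letters in
`Σ_* = {m : 1 ≤ |m| ≤ s}` such that no letter `t_j > 0` is immediately followed by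
`t_{j+1} = −t_j`. -/
noncomputable def Tset (s k : ℕ) : Finset (Fin k → ℤ) :=
  letI := Classical.decPred
    (fun t : Fin k → ℤ => (∀ i, t i ≠ 0) ∧
      ∀ (i : Fin k) (h : (i : ℕ) + 1 < k), ¬(0 < t i ∧ t ⟨(i : ℕ) + 1, h⟩ = -t i))
  (Fintype.piFinset fun _ : Fin k => Finset.Icc (-(s : ℤ)) (s : ℤ)).filter
    (fun t => (∀ i, t i ≠ 0) ∧
      ∀ (i : Fin k) (h : (i : ℕ) + 1 < k), ¬(0 < t i ∧ t ⟨(i : ℕ) + 1, h⟩ = -t i))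


/-!
Reading a string from right to left, skip zeros and let a letter `m > 0` cancel against a `-m`
immediately to its right; the resulting reduced word `normalWord` is a right fold, and each
local move leaves the fold of its two letters over any word unchanged, so it is an invariant of
`~`. Conversely, sliding zeros to the right and replacing each cancelled `m (-m)` by `0 0` brings
every string to its normal word padded with zeros. Hence the classes correspond to the reduced
words of length at most `n`, which are exactly the elements of the `T_k`, `k ≤ n`.
-/

open Relation

theorem List.exists_eq_append_cons_cons_iff {α : Type*} {p q : List α} {k : ℕ}
    {x y x' y' : α} :
    (∃ l₁ l₂, l₁.length = k ∧ p = l₁ ++ x :: y :: l₂ ∧ q = l₁ ++ x' :: y' :: l₂) ↔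
      p[k]? = some x ∧ p[k + 1]? = some y ∧ q[k]? = some x' ∧ q[k + 1]? = some y' ∧
        ∀ i, i ≠ k → i ≠ k + 1 → p[i]? = q[i]? := by
  constructor
  · rintro ⟨l₁, l₂, rfl, rfl, rfl⟩
    refine ⟨by simp, by simp, by simp, by simp, fun i hi hi' => ?_⟩
    simp only [List.getElem?_append]
    split_ifs
    · rfl
    · obtain ⟨j, hj⟩ : ∃ j, i - l₁.length = j + 2 := ⟨i - l₁.length - 2, by omega⟩
      simp [hj]
  · rintro ⟨hx, hy, hx', hy', hpq⟩
    have split {r : List α} {a b : α} (ha : r[k]? = some a) (hb : r[k + 1]? = some b) :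
        r = r.take k ++ a :: b :: r.drop (k + 2) := by
      obtain ⟨hk, rfl⟩ := List.getElem?_eq_some_iff.1 ha
      obtain ⟨hk1, rfl⟩ := List.getElem?_eq_some_iff.1 hb
      rw [← List.drop_eq_getElem_cons, ← List.drop_eq_getElem_cons, List.take_append_drop]
    refine ⟨p.take k, p.drop (k + 2), ?_, split hx hy, (split hx' hy').trans ?_⟩
    · have := (List.getElem?_eq_some_iff.1 hx).1
      simp only [List.length_take]
      omega
    · congr 1
      · refine List.ext_getElem? fun i => ?_
        simp only [List.getElem?_take]
        split_ifs with hi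
        exacts [(hpq i (by omega) (by omega)).symm, rfl]
      · congr 2
        refine List.ext_getElem? fun i => ?_
        simp only [List.getElem?_drop]
        exact (hpq _ (by omega) (by omega)).symm

def NoCancel (a b : ℤ) : Prop := ¬(0 < a ∧ b = -a)

def IsReducedWord (l : List ℤ) : Prop := (∀ x ∈ l, x ≠ 0) ∧ l.IsChain NoCancel

def pushLetter (a : ℤ) (w : List ℤ) : List ℤ :=
  if a = 0 then w else if 0 < a ∧ w.head? = some (-a) then w.tail else a :: w

def normalWord (l : List ℤ) : List ℤ := l.foldr pushLetter []

section NormalWord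

@[simp] lemma normalWord_nil : normalWord [] = [] := rfl

@[simp] lemma normalWord_cons (a : ℤ) (l : List ℤ) :
    normalWord (a :: l) = pushLetter a (normalWord l) := rfl

lemma pushLetter_sublist (a : ℤ) (w : List ℤ) : (pushLetter a w).Sublist (a :: w) := by
  unfold pushLetter
  split_ifs
  · exact List.sublist_cons_self a w
  · exact w.tail_sublist.trans (List.sublist_cons_self a w)
  · exact List.Sublist.refl _

lemma normalWord_sublist (l : List ℤ) : (normalWord l).Sublist l := by
  induction l with
  | nil => exact List.Sublist.refl _
  | cons a l ih => exact (pushLetter_sublist a _).trans (ih.cons_cons a)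

lemma ne_zero_of_mem_normalWord {l : List ℤ} {x : ℤ} (hx : x ∈ normalWord l) : x ≠ 0 := by
  induction l with
  | nil => simp at hx
  | cons a l ih =>
    rw [normalWord_cons, pushLetter] at hx
    split_ifs at hx with h0
    · exact ih hx
    · exact ih (List.mem_of_mem_tail hx)
    · rcases List.mem_cons.1 hx with rfl | hx
      exacts [h0, ih hx]

lemma abs_le_of_mem_normalWord {s : ℕ} {l : List ℤ} (hl : ∀ x ∈ l, |x| ≤ s) :
    ∀ x ∈ normalWord l, |x| ≤ s :=
  fun x hx => hl x ((normalWord_sublist l).subset hx)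

lemma isChain_pushLetter (a : ℤ) {w : List ℤ} (hw : w.IsChain NoCancel) :
    (pushLetter a w).IsChain NoCancel := by
  unfold pushLetter
  split_ifs with h0 hcancel
  · exact hw
  · exact hw.tail
  · cases w with
    | nil => exact List.isChain_singleton a
    | cons b t => exact List.isChain_cons_cons.2 ⟨fun h => hcancel ⟨h.1, by simp [h.2]⟩, hw⟩

lemma isReducedWord_normalWord (l : List ℤ) : IsReducedWord (normalWord l) := by
  refine ⟨fun x hx => ne_zero_of_mem_normalWord hx, ?_⟩
  induction l with
  | nil => exact List.isChain_nil
  | cons a l ih => exact isChain_pushLetter a ih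

lemma IsReducedWord.normalWord_eq {l : List ℤ} (h : IsReducedWord l) : normalWord l = l := by
  induction l with
  | nil => rfl
  | cons a l ih =>
    rw [normalWord_cons, ih ⟨fun x hx => h.1 x (List.mem_cons_of_mem a hx), h.2.tail⟩]
    have ha : a ≠ 0 := h.1 a List.mem_cons_self
    cases l with
    | nil => simp [pushLetter, ha]
    | cons b t =>
      have hab : NoCancel a b := (List.isChain_cons_cons.1 h.2).1
      simp only [NoCancel] at hab
      simp [pushLetter, ha, hab]

lemma normalWord_append_replicate_zero (l : List ℤ) (z : ℕ) :
    normalWord (l ++ List.replicate z 0) = normalWord l := by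
  have hz : normalWord (List.replicate z 0) = [] := by
    induction z with
    | zero => rfl
    | succ z ih => simp [List.replicate_succ, ih, pushLetter]
  rw [normalWord, List.foldr_append, ← normalWord, hz, normalWord]

end NormalWord

def PairMove (s : ℕ) (x y x' y' : ℤ) : Prop :=
  (∃ m : ℤ, m ≠ 0 ∧ |m| ≤ (s : ℤ) ∧
      ((x = 0 ∧ y = m ∧ x' = m ∧ y' = 0) ∨ (x = m ∧ y = 0 ∧ x' = 0 ∧ y' = m))) ∨
    (∃ m : ℤ, 1 ≤ m ∧ m ≤ (s : ℤ) ∧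
      ((x = 0 ∧ y = 0 ∧ x' = m ∧ y' = -m) ∨ (x = m ∧ y = -m ∧ x' = 0 ∧ y' = 0)))

def ListMove (s : ℕ) (p q : List ℤ) : Prop :=
  ∃ l₁ x y x' y' l₂, p = l₁ ++ x :: y :: l₂ ∧ q = l₁ ++ x' :: y' :: l₂ ∧ PairMove s x y x' y'

section Moves

variable {s : ℕ}

lemma PairMove.abs_le {x y x' y' : ℤ} (h : PairMove s x y x' y') :
    |x'| ≤ s ∧ |y'| ≤ s := by
  rcases h with ⟨m, -, hm, ⟨-, -, hx, hy⟩ | ⟨-, -, hx, hy⟩⟩ |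
    ⟨m, hm, hms, ⟨-, -, hx, hy⟩ | ⟨-, -, hx, hy⟩⟩
  all_goals rw [hx, hy]
  all_goals simp only [abs_zero, abs_neg, Nat.cast_nonneg, and_self, hm]
  all_goals rw [abs_of_pos (by omega)]; exact hms

lemma PairMove.pushLetter_pushLetter {x y x' y' : ℤ} (h : PairMove s x y x' y') (w : List ℤ) :
    pushLetter x (pushLetter y w) = pushLetter x' (pushLetter y' w) := by
  rcases h with ⟨m, -, -, ⟨hx, hy, hx', hy'⟩ | ⟨hx, hy, hx', hy'⟩⟩ |
    ⟨m, hm, -, ⟨hx, hy, hx', hy'⟩ | ⟨hx, hy, hx', hy'⟩⟩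
  all_goals rw [hx, hy, hx', hy']
  · simp [pushLetter]
  · simp [pushLetter]
  -- `-m` is never cancelled when pushed, so it is then cancelled by `m`.
  all_goals simp [pushLetter, show m ≠ 0 by omega, show ¬m < 0 by omega, show 0 < m by omega]

lemma ListMove.length_eq {p q : List ℤ} (h : ListMove s p q) : p.length = q.length := by
  obtain ⟨l₁, x, y, x', y', l₂, rfl, rfl, -⟩ := h
  simp

lemma ListMove.abs_le {p q : List ℤ} (h : ListMove s p q) (hp : ∀ x ∈ p, |x| ≤ s) :
    ∀ x ∈ q, |x| ≤ s := by
  obtain ⟨l₁, x, y, x', y', l₂, rfl, rfl, h⟩ := h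
  simp only [List.mem_append, List.mem_cons] at hp ⊢
  rintro z (hz | rfl | rfl | hz)
  exacts [hp z (.inl hz), h.abs_le.1, h.abs_le.2, hp z (.inr (.inr (.inr hz)))]

lemma ListMove.normalWord_eq {p q : List ℤ} (h : ListMove s p q) :
    normalWord p = normalWord q := by
  obtain ⟨l₁, x, y, x', y', l₂, rfl, rfl, h⟩ := h
  simp only [normalWord, List.foldr_append, List.foldr_cons, h.pushLetter_pushLetter]

lemma ListMove.cons {p q : List ℤ} (a : ℤ) (h : ListMove s p q) : ListMove s (a :: p) (a :: q) := by
  obtain ⟨l₁, x, y, x', y', l₂, rfl, rfl, h⟩ := h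
  exact ⟨a :: l₁, x, y, x', y', l₂, rfl, rfl, h⟩

lemma listMove_zero_swap {a : ℤ} (ha : a ≠ 0) (has : |a| ≤ s) (l : List ℤ) :
    ListMove s (0 :: a :: l) (a :: 0 :: l) :=
  ⟨[], 0, a, a, 0, l, rfl, rfl, .inl ⟨a, ha, has, .inl ⟨rfl, rfl, rfl, rfl⟩⟩⟩

lemma listMove_annihilate {m : ℤ} (hm : 0 < m) (hms : m ≤ s) (l : List ℤ) :
    ListMove s (m :: -m :: l) (0 :: 0 :: l) :=
  ⟨[], m, -m, 0, 0, l, rfl, rfl, .inr ⟨m, hm, hms, .inr ⟨rfl, rfl, rfl, rfl⟩⟩⟩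

lemma reflTransGen_listMove_cons {p q : List ℤ} (a : ℤ) (h : ReflTransGen (ListMove s) p q) :
    ReflTransGen (ListMove s) (a :: p) (a :: q) :=
  h.lift (a :: ·) fun _ _ h => h.cons a

lemma reflTransGen_replicate_zero_append {w : List ℤ} (hw : ∀ x ∈ w, x ≠ 0 ∧ |x| ≤ s)
    (j : ℕ) (l : List ℤ) :
    ReflTransGen (ListMove s) (List.replicate j 0 ++ (w ++ l))
      (w ++ (List.replicate j 0 ++ l)) := by
  induction j with
  | zero => exact .refl
  | succ j ih =>
    refine (reflTransGen_listMove_cons 0 ih).trans ?_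
    clear ih
    induction w with
    | nil => exact .refl
    | cons a w ih =>
      have ha := hw a List.mem_cons_self
      exact .head (listMove_zero_swap ha.1 ha.2 _) <|
        reflTransGen_listMove_cons a (ih fun x hx => hw x (List.mem_cons_of_mem a hx))

theorem exists_reflTransGen_normalWord_append {l : List ℤ} (hl : ∀ x ∈ l, |x| ≤ s) :
    ∃ z, ReflTransGen (ListMove s) l (normalWord l ++ List.replicate z 0) := by
  induction l with
  | nil => exact ⟨0, .refl⟩
  | cons a l ih =>
    obtain ⟨z, hz⟩ := ih fun x hx => hl x (List.mem_cons_of_mem a hx)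
    have hN : ∀ x ∈ normalWord l, x ≠ 0 ∧ |x| ≤ s := fun x hx =>
      ⟨ne_zero_of_mem_normalWord hx,
        abs_le_of_mem_normalWord (fun x hx => hl x (List.mem_cons_of_mem a hx)) x hx⟩
    replace hz := reflTransGen_listMove_cons a hz
    rw [normalWord_cons, pushLetter]
    split_ifs with h0 hcancel
    · subst h0
      refine ⟨1 + z, hz.trans ?_⟩
      simpa [List.replicate_add] using reflTransGen_replicate_zero_append hN 1 (List.replicate z 0)
    · obtain ⟨hpos, hhead⟩ := hcancel
      obtain ⟨t, ht⟩ := List.head?_eq_some_iff.1 hhead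
      rw [ht] at hz hN ⊢
      have hat : |a| ≤ s := hl a List.mem_cons_self
      rw [abs_of_pos hpos] at hat
      refine ⟨2 + z, (hz.tail (listMove_annihilate hpos hat _)).trans ?_⟩
      simpa [List.replicate_add] using reflTransGen_replicate_zero_append
        (fun x hx => hN x (List.mem_cons_of_mem _ hx)) 2 (List.replicate z 0)
    · exact ⟨z, hz⟩

end Moves

section Strings

variable {s n : ℕ}

def intList (u : SpinStr s n) : List ℤ := List.ofFn fun i => (u i : ℤ)

-- Letters outside `Σ` are clamped into it; on words over `Σ` this is exact (`intList_strOfList`).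
def strOfList (s n : ℕ) (w : List ℤ) : SpinStr s n :=
  fun i => ⟨max (-s) (min (w.getD i 0) s), by simp⟩

lemma getElem?_intList (u : SpinStr s n) (i : ℕ) :
    (intList u)[i]? = if h : i < n then some (u ⟨i, h⟩ : ℤ) else none :=
  List.getElem?_ofFn

@[simp] lemma length_intList (u : SpinStr s n) : (intList u).length = n :=
  List.length_ofFn

lemma abs_le_of_mem_intList (u : SpinStr s n) : ∀ x ∈ intList u, |x| ≤ s := by
  simp only [intList, List.mem_ofFn, forall_exists_index, forall_apply_eq_imp_iff]
  exact fun i => abs_le.2 (Finset.mem_Icc.1 (u i).2)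

lemma intList_injective : Function.Injective (intList (s := s) (n := n)) := fun _ _ h =>
  funext fun i => Subtype.ext (congrFun (List.ofFn_injective h) i)

lemma intList_strOfList {w : List ℤ} (hw : ∀ x ∈ w, |x| ≤ s) (hlen : w.length ≤ n) :
    intList (strOfList s n w) = w ++ List.replicate (n - w.length) 0 := by
  refine List.ext_getElem? fun i => ?_
  rw [getElem?_intList, List.getElem?_append, List.getElem?_replicate]
  by_cases hi : i < w.length
  · have := abs_le.1 (hw _ (List.getElem_mem hi))
    simp [strOfList, hi, show i < n by omega, List.getD_eq_getElem?_getD, this.1, this.2]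
  · by_cases hin : i < n
    · simp [strOfList, hi, hin, show i - w.length < n - w.length by omega,
        List.getD_eq_getElem?_getD]
    · simp [hi, hin, show ¬i - w.length < n - w.length by omega]

lemma getElem?_intList_of_lt (u : SpinStr s n) {i : ℕ} (hi : i < n) :
    (intList u)[i]? = some (u ⟨i, hi⟩ : ℤ) := by
  rw [getElem?_intList, dif_pos hi]

lemma moveRel_iff_exists_pairMove {u v : SpinStr s n} :
    MoveRel s n u v ↔ ∃ k : ℕ, ∃ hk : k + 1 < n,
      (∀ i : Fin n, (i : ℕ) ≠ k → (i : ℕ) ≠ k + 1 → u i = v i) ∧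
      PairMove s (u ⟨k, by omega⟩) (u ⟨k + 1, hk⟩) (v ⟨k, by omega⟩) (v ⟨k + 1, hk⟩) :=
  Iff.rfl

theorem moveRel_iff_listMove {u v : SpinStr s n} :
    MoveRel s n u v ↔ ListMove s (intList u) (intList v) := by
  rw [moveRel_iff_exists_pairMove]
  constructor
  · rintro ⟨k, hk, hagree, hpm⟩
    have hpq (i : ℕ) (hi : i ≠ k) (hi' : i ≠ k + 1) : (intList u)[i]? = (intList v)[i]? := by
      rw [getElem?_intList, getElem?_intList]
      split_ifs with h
      · rw [hagree ⟨i, h⟩ hi hi']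
      · rfl
    obtain ⟨l₁, l₂, -, hu, hv⟩ := List.exists_eq_append_cons_cons_iff.2
      ⟨getElem?_intList_of_lt u _, getElem?_intList_of_lt u hk,
        getElem?_intList_of_lt v _, getElem?_intList_of_lt v hk, hpq⟩
    exact ⟨l₁, _, _, _, _, l₂, hu, hv, hpm⟩
  · rintro ⟨l₁, x, y, x', y', l₂, hu, hv, hpm⟩
    obtain ⟨hx, hy, hx', hy', hpq⟩ := List.exists_eq_append_cons_cons_iff.1 ⟨l₁, l₂, rfl, hu, hv⟩
    have hk : l₁.length + 1 < n := by
      simpa using (List.getElem?_eq_some_iff.1 hy).1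
    rw [getElem?_intList_of_lt u (by omega), Option.some_inj] at hx
    rw [getElem?_intList_of_lt u hk, Option.some_inj] at hy
    rw [getElem?_intList_of_lt v (by omega), Option.some_inj] at hx'
    rw [getElem?_intList_of_lt v hk, Option.some_inj] at hy'
    refine ⟨l₁.length, hk, fun i hi hi' => Subtype.ext ?_, by rwa [hx, hy, hx', hy']⟩
    have hi := hpq i hi hi'
    rwa [getElem?_intList_of_lt u i.2, getElem?_intList_of_lt v i.2, Option.some_inj] at hi

lemma exists_moveRel_of_listMove (u : SpinStr s n) {w : List ℤ}
    (h : ListMove s (intList u) w) : ∃ v, intList v = w ∧ MoveRel s n u v := by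
  have hw : intList (strOfList s n w) = w := by
    rw [intList_strOfList (h.abs_le (abs_le_of_mem_intList u)) (by simp [← h.length_eq]),
      ← h.length_eq, length_intList, Nat.sub_self, List.replicate_zero, List.append_nil]
  exact ⟨_, hw, moveRel_iff_listMove.2 (by rwa [hw])⟩

lemma exists_eqvGen_of_reflTransGen (u : SpinStr s n) {w : List ℤ}
    (h : ReflTransGen (ListMove s) (intList u) w) :
    ∃ v, intList v = w ∧ EqvGen (MoveRel s n) u v := by
  induction h with
  | refl => exact ⟨u, rfl, .refl u⟩
  | tail _ hstep ih =>
    obtain ⟨v, rfl, huv⟩ := ih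
    obtain ⟨v', hv', hvv'⟩ := exists_moveRel_of_listMove v hstep
    exact ⟨v', hv', huv.trans _ _ _ (.rel _ _ hvv')⟩

lemma normalWord_intList_eq_of_eqvGen {u v : SpinStr s n} (h : EqvGen (MoveRel s n) u v) :
    normalWord (intList u) = normalWord (intList v) := by
  induction h with
  | rel _ _ h => exact (moveRel_iff_listMove.1 h).normalWord_eq
  | refl => rfl
  | symm _ _ _ ih => exact ih.symm
  | trans _ _ _ _ _ ih₁ ih₂ => exact ih₁.trans ih₂

lemma normalWord_intList_strOfList {l : List ℤ} (hb : ∀ x ∈ l, |x| ≤ s) (hl : IsReducedWord l)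
    (hlen : l.length ≤ n) : normalWord (intList (strOfList s n l)) = l := by
  rw [intList_strOfList hb hlen, normalWord_append_replicate_zero, hl.normalWord_eq]

theorem eqvGen_strOfList_normalWord (u : SpinStr s n) :
    EqvGen (MoveRel s n) u (strOfList s n (normalWord (intList u))) := by
  obtain ⟨z, hz⟩ := exists_reflTransGen_normalWord_append (abs_le_of_mem_intList u)
  obtain ⟨v, hv, huv⟩ := exists_eqvGen_of_reflTransGen u hz
  have hlen : n = (normalWord (intList u)).length + z := by simpa using congrArg List.length hv
  convert huv using 1
  apply intList_injective
  rw [hv, intList_strOfList (abs_le_of_mem_normalWord (abs_le_of_mem_intList u)) (by omega),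
    show n - _ = z by omega]

end Strings

lemma mem_Tset_iff {s k : ℕ} {t : Fin k → ℤ} :
    t ∈ Tset s k ↔ (∀ x ∈ List.ofFn t, |x| ≤ s) ∧ IsReducedWord (List.ofFn t) := by
  simp only [Tset, Finset.mem_filter, Fintype.mem_piFinset, Finset.mem_Icc, IsReducedWord,
    List.mem_ofFn, forall_exists_index, forall_apply_eq_imp_iff, List.isChain_ofFn, NoCancel,
    abs_le, ne_eq]
  exact and_congr_right' <| and_congr_right' ⟨fun h i hi => h ⟨i, by omega⟩ hi, fun h i => h i⟩

lemma mem_sigma_Tset_iff {s n : ℕ} {t : Σ k, Fin k → ℤ} :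
    t ∈ (Finset.range (n + 1)).sigma (Tset s) ↔
      (List.ofFn t.2).length ≤ n ∧ (∀ x ∈ List.ofFn t.2, |x| ≤ s) ∧
        IsReducedWord (List.ofFn t.2) := by
  rw [Finset.mem_sigma, Finset.mem_range, Nat.lt_succ_iff, mem_Tset_iff, List.length_ofFn]

theorem stmt_13_general (s n : ℕ) :
    Nat.card (Quotient (Relation.EqvGen.setoid (MoveRel s n)))
      = ∑ k ∈ Finset.range (n + 1), (Tset s k).card := by
  rw [← Finset.card_sigma, ← Nat.card_eq_finsetCard]
  symm
  refine Nat.card_eq_of_bijective (fun t => ⟦strOfList s n (List.ofFn t.1.2)⟧) ⟨?_, ?_⟩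
  · rintro ⟨t, ht⟩ ⟨t', ht'⟩ h
    obtain ⟨hlen, hb, hred⟩ := mem_sigma_Tset_iff.1 ht
    obtain ⟨hlen', hb', hred'⟩ := mem_sigma_Tset_iff.1 ht'
    have hword := normalWord_intList_eq_of_eqvGen (Quotient.exact h)
    rw [normalWord_intList_strOfList hb hred hlen,
      normalWord_intList_strOfList hb' hred' hlen'] at hword
    exact Subtype.ext (List.ofFn_inj'.1 hword)
  · refine Quotient.ind fun u => ?_
    have hmem : ⟨_, (normalWord (intList u)).get⟩ ∈ (Finset.range (n + 1)).sigma (Tset s) := by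
      rw [mem_sigma_Tset_iff, List.ofFn_get]
      exact ⟨(normalWord_sublist _).length_le.trans (length_intList u).le,
        abs_le_of_mem_normalWord (abs_le_of_mem_intList u), isReducedWord_normalWord _⟩
    refine ⟨⟨_, hmem⟩, ?_⟩
    simp only [List.ofFn_get]
    exact Quotient.sound (eqvGen_strOfList_normalWord u).symm

theorem stmt_13 (s n : ℕ) (hs : 1 ≤ s) (hn : 1 ≤ n) :
    Nat.card (Quotient (Relation.EqvGen.setoid (MoveRel s n)))
      = ∑ k ∈ Finset.range (n + 1), (Tset s k).card :=
  stmt_13_general s n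
end

section
/- (Finite core of the linear-distance ground-space code theorem) Let s ≥ 1, t ≥ 1, n ≥ 1 be integers with 2t + 1 ≤ n, set q = 2s+1, and suppose 2^n ≥ 2·V_2(2t)·V_q(2t), where V_q(r) = Σ_{w=0}^{r} C(n,w)(q−1)^w. Then there exist a set C of q-ary strings of length n all of whose letters lie in the two-element set {1, 2} ⊆ ZMod q (in particular, no positive letter m is ever followed by −m, so the corresponding basis states lie in the ground space of the Hamiltonian H_n), together with disjoint nonempty subsets C_0, C_1 ⊆ C and unit vectors ψ_0 = Σ_{c∈C_0} α_c e_c and ψ_1 = Σ_{c∈C_1} β_c e_c with nonnegative real coefficients, such that for all q-ary strings a, b of length n with wt(a) ≤ 2t and wt(b) ≤ 2t: ⟨ψ_0, (X^a Z^b) ψ_1⟩ = 0 and ⟨ψ_0, (X^a Z^b) ψ_0⟩ = ⟨ψ_1, (X^a Z^b) ψ_1⟩ (the Knill–Laflamme conditions for a quantum code of distance 2t+1 correcting t errors). -/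
open Finset

/-- The primitive `q`-th root of unity `ω = exp(2πi/q)`. -/
noncomputable def omegaQ (q : ℕ) : ℂ := Complex.exp (2 * Real.pi * Complex.I / q)

/-- The generalized Pauli operator `X^a Z^b`, determined by
`(X^a Z^b) e_c = ω^{b·c} e_{c−a}`. -/
noncomputable def pauliXZ (n q : ℕ) [NeZero q] (a b : Fin n → ZMod q) :
    EuclideanSpace ℂ (Fin n → ZMod q) →ₗ[ℂ] EuclideanSpace ℂ (Fin n → ZMod q) where
  toFun ψ := WithLp.toLp 2 (fun d => omegaQ q ^ (∑ i, b i * (d i + a i)).val * ψ (d + a))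
  map_add' ψ φ := by ext d; simp [mul_add]
  map_smul' r ψ := by ext d; simp <;> ring

/-- `V_q(r) = Σ_{w=0}^{r} C(n,w)(q−1)^w`, the volume of the `q`-ary Hamming ball
of radius `r` in length `n`. -/
def hammingBallVol (n q r : ℕ) : ℕ := ∑ w ∈ Finset.range (r + 1), n.choose w * (q - 1) ^ w

/-!
A greedy (Gilbert–Varshamov) argument in `{1,2}ⁿ` gives a code `C` of minimum distance `> 2t`
with `|C| ≥ 2ⁿ / V₂(2t) > V_q(2t)`. As `C` has more words than there are phases `b` of weight
`≤ 2t`, some nonzero real weighting `m` of `C` is annihilated by every character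
`c ↦ ω^{b·c}` with `wt b ≤ 2t`; it can be taken real because this family of characters is closed
under conjugation. The case `b = 0` gives `∑ m = 0`, so the square roots of the normalized
positive and negative parts of `m` define `ψ₀` and `ψ₁`. An error `X^a Z^b` with `a ≠ 0` moves
every codeword off the code, so all its matrix elements vanish; for `a = 0` the two diagonal
elements differ by `∑ m_c ω^{b·c} / P = 0`.
-/

theorem hammingBallVol_pos (n q r : ℕ) : 0 < hammingBallVol n q r := by
  unfold hammingBallVol
  rw [sum_range_succ']
  simp

theorem card_hammingBall_le {n : ℕ} {β : Type*} [Fintype β] [DecidableEq β]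
    (c : Fin n → β) (r : ℕ) :
    #{x | hammingDist x c ≤ r} ≤ hammingBallVol n (Fintype.card β) r := by
  -- `x` is determined by the set `S` where it differs from `c` and by its letters `≠ c i` on `S`
  let box (S : Finset (Fin n)) : Finset (Fin n → β) :=
    Fintype.piFinset fun i => if i ∈ S then univ.erase (c i) else {c i}
  have hbox (S : Finset (Fin n)) : #(box S) = (Fintype.card β - 1) ^ #S := by
    simp [box, Fintype.card_piFinset, apply_ite Finset.card, prod_ite_mem]
  calc #{x | hammingDist x c ≤ r}
      ≤ #((range (r + 1)).biUnion fun w => (powersetCard w univ).biUnion box) := by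
        refine card_le_card fun x hx => ?_
        simp only [mem_filter, mem_univ, true_and] at hx
        simp only [mem_biUnion, mem_range, mem_powersetCard_univ]
        refine ⟨_, Nat.lt_succ_of_le hx, ({i | x i ≠ c i} : Finset (Fin n)), rfl, ?_⟩
        simp only [box, Fintype.mem_piFinset]
        intro i
        by_cases h : x i = c i <;> simp [h]
    _ ≤ ∑ w ∈ range (r + 1), ∑ S ∈ powersetCard w univ, #(box S) :=
        card_biUnion_le.trans (sum_le_sum fun _ _ => card_biUnion_le)
    _ = hammingBallVol n (Fintype.card β) r := by
        refine sum_congr rfl fun w _ => ?_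
        rw [sum_congr rfl fun S hS => by rw [hbox, (mem_powersetCard.1 hS).2]]
        simp

theorem exists_pairwise_not_rel_forall_exists_rel {α : Type*} [Fintype α]
    (R : α → α → Prop) (hrefl : ∀ x, R x x) (hsymm : ∀ x y, R x y → R y x) :
    ∃ D : Finset α, (D : Set α).Pairwise (fun x y => ¬ R x y) ∧ ∀ x, ∃ c ∈ D, R x c := by
  classical
  obtain ⟨D, hD, hmax⟩ := exists_max_image
    ({D | (D : Set α).Pairwise fun x y => ¬ R x y} : Finset (Finset α)) card ⟨∅, by simp⟩
  rw [mem_filter] at hD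
  refine ⟨D, hD.2, fun x => ?_⟩
  by_contra! hfar
  have hx : x ∉ D := fun hx => hfar x hx (hrefl x)
  have hins : ((insert x D : Finset α) : Set α).Pairwise fun x y => ¬ R x y := by
    rw [coe_insert]
    exact hD.2.insert fun c hc _ => ⟨hfar c hc, fun h => hfar c hc (hsymm _ _ h)⟩
  have := hmax (insert x D) (by simpa using hins)
  rw [card_insert_of_notMem hx] at this
  omega

theorem exists_separated_card_pow_le {β : Type*} [Fintype β] [DecidableEq β] (n r : ℕ) :
    ∃ D : Finset (Fin n → β), (D : Set (Fin n → β)).Pairwise (fun x y => r < hammingDist x y) ∧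
      Fintype.card β ^ n ≤ #D * hammingBallVol n (Fintype.card β) r := by
  obtain ⟨D, hsep, hcover⟩ := exists_pairwise_not_rel_forall_exists_rel
    (fun x y : Fin n → β => hammingDist x y ≤ r) (fun x => by simp)
    (fun x y h => by rwa [hammingDist_comm] at h)
  refine ⟨D, by simpa using hsep, ?_⟩
  calc Fintype.card β ^ n = #(univ : Finset (Fin n → β)) := by simp
    _ ≤ #(D.biUnion fun c => {x | hammingDist x c ≤ r}) :=
        card_le_card fun x _ => by simpa using hcover x
    _ ≤ ∑ c ∈ D, #{x | hammingDist x c ≤ r} := card_biUnion_le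
    _ ≤ ∑ _c ∈ D, hammingBallVol n (Fintype.card β) r :=
        sum_le_sum fun c _ => card_hammingBall_le c r
    _ = #D * hammingBallVol n (Fintype.card β) r := by simp

theorem exists_two_letter_separated_card_pow_le {γ : Type*} [DecidableEq γ] {u v : γ}
    (huv : u ≠ v) (n r : ℕ) :
    ∃ C : Finset (Fin n → γ), (∀ c ∈ C, ∀ i, c i = u ∨ c i = v) ∧
      (C : Set (Fin n → γ)).Pairwise (fun x y => r < hammingDist x y) ∧
      2 ^ n ≤ #C * hammingBallVol n 2 r := by
  let e : Bool ↪ γ := ⟨fun x => cond x u v, by rintro (_ | _) (_ | _) h <;> simp_all [eq_comm]⟩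
  obtain ⟨D, hDsep, hDcard⟩ := exists_separated_card_pow_le (β := Bool) n r
  refine ⟨D.map e.arrowCongrRight, fun c hc i => ?_, ?_, by simpa using hDcard⟩
  · obtain ⟨x, -, rfl⟩ := mem_map.1 hc
    show e (x i) = u ∨ e (x i) = v
    cases x i
    exacts [Or.inr rfl, Or.inl rfl]
  · rw [coe_map, e.arrowCongrRight.injective.injOn.pairwise_image]
    intro x hx y hy hxy
    show r < hammingDist (fun i => e (x i)) (fun i => e (y i))
    rw [hammingDist_comp (fun _ => e) fun _ => e.injective]
    exact hDsep hx hy hxy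

theorem ZMod.one_ne_two_of_two_lt {q : ℕ} (hq : 2 < q) : (1 : ZMod q) ≠ 2 := by
  intro h
  have h' := congrArg ZMod.val (show ((1 : ℕ) : ZMod q) = ((2 : ℕ) : ZMod q) by exact_mod_cast h)
  rw [ZMod.val_natCast, ZMod.val_natCast, Nat.mod_eq_of_lt (by omega),
    Nat.mod_eq_of_lt hq] at h'
  omega

theorem exists_real_ne_zero_sum_mul_eq_zero {ι κ : Type*} (s : Finset ι) (T : Finset κ)
    (f : κ → ι → ℂ) (hconj : ∀ k ∈ T, ∃ k' ∈ T, ∀ i, f k' i = starRingEnd ℂ (f k i))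
    (hcard : #T < #s) :
    ∃ m : ι → ℝ, (∃ i ∈ s, m i ≠ 0) ∧ ∀ k ∈ T, ∑ i ∈ s, (m i : ℂ) * f k i = 0 := by
  -- One real equation per `k` suffices: the sum for the conjugate index is the conjugate sum,
  -- so `re + im = 0` at both `k` and `k'` forces the sum at `k` to vanish.
  let v : ι → T → ℝ := fun i k => (f k i).re + (f k i).im
  have hdep : ¬ LinearIndepOn ℝ v s := fun h => by
    have := h.fintype_card_le_finrank
    simp at this
    omega
  obtain ⟨m, hm, i, hi, hmi⟩ := not_linearIndepOn_finset_iff.1 hdep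
  have hreim (k) (hk : k ∈ T) :
      (∑ i ∈ s, (m i : ℂ) * f k i).re + (∑ i ∈ s, (m i : ℂ) * f k i).im = 0 := by
    simpa [v, Complex.re_sum, Complex.im_sum, mul_add, sum_add_distrib] using
      congrFun hm ⟨k, hk⟩
  refine ⟨m, ⟨i, hi, hmi⟩, fun k hk => ?_⟩
  obtain ⟨k', hk', hf⟩ := hconj k hk
  have hconj_sum : ∑ i ∈ s, (m i : ℂ) * f k' i = starRingEnd ℂ (∑ i ∈ s, (m i : ℂ) * f k i) := by
    simp [hf, map_sum]
  have h' := hreim k' hk'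
  rw [hconj_sum, Complex.conj_re, Complex.conj_im] at h'
  have h := hreim k hk
  apply Complex.ext <;> simp only [Complex.zero_re, Complex.zero_im] <;> linarith

theorem sum_filter_pos_add_sum_filter_neg {ι α M : Type*} [LinearOrder α] [Zero α]
    [AddCommMonoid M] (s : Finset ι) (m : ι → α) (g : ι → M) (hg : ∀ i ∈ s, m i = 0 → g i = 0) :
    ∑ i ∈ s with 0 < m i, g i + ∑ i ∈ s with m i < 0, g i = ∑ i ∈ s, g i := by
  rw [sum_filter, sum_filter, ← sum_add_distrib]
  refine sum_congr rfl fun i hi => ?_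
  rcases lt_trichotomy (m i) 0 with h | h | h
  · simp [h, h.not_gt]
  · simp [h, hg i hi h]
  · simp [h, h.not_gt]

theorem sum_filter_pos_sqrt_mul_self_eq_sum_filter_neg {ι : Type*} (s : Finset ι) {m : ι → ℝ}
    {P : ℝ} (hP : 0 ≤ P) {g : ι → ℂ} (h : ∑ i ∈ s, (m i : ℂ) * g i = 0) :
    ∑ i ∈ s with 0 < m i, ((√(m i / P) * √(m i / P) : ℝ) : ℂ) * g i =
      ∑ i ∈ s with m i < 0, ((√(-m i / P) * √(-m i / P) : ℝ) : ℂ) * g i := by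
  have hsplit := sum_filter_pos_add_sum_filter_neg s m (fun i => (m i : ℂ) * g i)
    fun i _ hi => by simp [hi]
  rw [h] at hsplit
  calc ∑ i ∈ s with 0 < m i, ((√(m i / P) * √(m i / P) : ℝ) : ℂ) * g i
      = (P : ℂ)⁻¹ * ∑ i ∈ s with 0 < m i, (m i : ℂ) * g i := by
        rw [mul_sum]
        refine sum_congr rfl fun i hi => ?_
        rw [Real.mul_self_sqrt (div_nonneg (mem_filter.1 hi).2.le hP)]
        push_cast
        ring
    _ = (P : ℂ)⁻¹ * -∑ i ∈ s with m i < 0, (m i : ℂ) * g i := by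
        rw [eq_neg_of_add_eq_zero_left hsplit]
    _ = ∑ i ∈ s with m i < 0, ((√(-m i / P) * √(-m i / P) : ℝ) : ℂ) * g i := by
        rw [← sum_neg_distrib, mul_sum]
        refine sum_congr rfl fun i hi => ?_
        rw [Real.mul_self_sqrt (div_nonneg (neg_nonneg.2 (mem_filter.1 hi).2.le) hP)]
        push_cast
        ring

section Pauli

variable {n q : ℕ} [NeZero q]

theorem omegaQ_pow_val (x : ZMod q) : omegaQ q ^ x.val = ZMod.stdAddChar x := by
  rw [ZMod.stdAddChar_apply, ZMod.toCircle_apply, omegaQ, ← Complex.exp_nat_mul]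
  ring_nf

theorem pauliXZ_single (a b c : Fin n → ZMod q) :
    pauliXZ n q a b (EuclideanSpace.single c 1) =
      ZMod.stdAddChar (∑ i, b i * c i) • EuclideanSpace.single (c - a) 1 := by
  ext d
  simp only [pauliXZ, LinearMap.coe_mk, AddHom.coe_mk, PiLp.single_apply,
    PiLp.smul_apply, smul_eq_mul, eq_sub_iff_add_eq, omegaQ_pow_val]
  split_ifs with h
  · subst h; simp
  · simp

theorem inner_sum_single_pauliXZ_sum_single {r : ℕ} {C D D' : Finset (Fin n → ZMod q)}
    (hC : (C : Set (Fin n → ZMod q)).Pairwise fun x y => r < hammingDist x y)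
    (hD : D ⊆ C) (hD' : D' ⊆ C) (α β : (Fin n → ZMod q) → ℝ) {a : Fin n → ZMod q}
    (ha : hammingNorm a ≤ r) (b : Fin n → ZMod q) :
    inner ℂ (∑ c ∈ D, ((α c : ℝ) : ℂ) • EuclideanSpace.single c (1 : ℂ))
        (pauliXZ n q a b (∑ c ∈ D', ((β c : ℝ) : ℂ) • EuclideanSpace.single c (1 : ℂ))) =
      if a = 0 then ∑ c ∈ D ∩ D', ((α c * β c : ℝ) : ℂ) * ZMod.stdAddChar (∑ i, b i * c i)
      else 0 := by
  -- `X^a` moves a codeword to distance `wt a ≤ r` from itself, hence off the code unless `a = 0`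
  have hshift : ∀ c' ∈ D', c' - a ∈ D → a = 0 := by
    intro c' hc' hc
    by_contra ha0
    have : r < hammingDist (c' - a) c' := hC (hD hc) (hD' hc') (by simpa using ha0)
    rw [hammingDist_eq_hammingNorm, neg_sub, sub_add_cancel] at this
    omega
  simp only [map_sum, map_smul, sum_inner, inner_sum, inner_smul_left, inner_smul_right,
    pauliXZ_single, EuclideanSpace.inner_single_left, PiLp.single_apply, map_one,
    Complex.conj_ofReal, mul_ite, mul_one, mul_zero, sum_ite_eq']
  split_ifs with ha0
  · subst ha0
    simp only [sub_zero]
    rw [← sum_filter, filter_mem_eq_inter, inter_comm]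
    refine sum_congr rfl fun c _ => ?_
    push_cast
    ring
  · exact sum_eq_zero fun c' hc' => by rw [if_neg fun h => ha0 (hshift c' hc' h)]

theorem exists_knillLaflamme_states_of_separated {r : ℕ} {C : Finset (Fin n → ZMod q)}
    (hC : (C : Set (Fin n → ZMod q)).Pairwise fun x y => r < hammingDist x y)
    (m : (Fin n → ZMod q) → ℝ) (hm : ∃ c ∈ C, m c ≠ 0)
    (hker : ∀ b : Fin n → ZMod q, hammingNorm b ≤ r →
      ∑ c ∈ C, (m c : ℂ) * ZMod.stdAddChar (∑ i, b i * c i) = 0) :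
    ∃ C0 C1 : Finset (Fin n → ZMod q), C0 ⊆ C ∧ C1 ⊆ C ∧ Disjoint C0 C1 ∧
      C0.Nonempty ∧ C1.Nonempty ∧
      ∃ α β : (Fin n → ZMod q) → ℝ,
        (∀ c ∈ C0, 0 ≤ α c) ∧ (∀ c ∈ C1, 0 ≤ β c) ∧
        (∑ c ∈ C0, (α c) ^ 2 = 1) ∧ (∑ c ∈ C1, (β c) ^ 2 = 1) ∧
        ∃ ψ0 ψ1 : EuclideanSpace ℂ (Fin n → ZMod q),
          ψ0 = ∑ c ∈ C0, ((α c : ℝ) : ℂ) • EuclideanSpace.single c (1 : ℂ) ∧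
          ψ1 = ∑ c ∈ C1, ((β c : ℝ) : ℂ) • EuclideanSpace.single c (1 : ℂ) ∧
          ∀ a b : Fin n → ZMod q,
            hammingNorm a ≤ r → hammingNorm b ≤ r →
              (inner ℂ ψ0 (pauliXZ n q a b ψ1) : ℂ) = 0 ∧
              (inner ℂ ψ0 (pauliXZ n q a b ψ0) : ℂ) = inner ℂ ψ1 (pauliXZ n q a b ψ1) := by
  have hsum : ∑ c ∈ C, m c = 0 := by
    have h0 := hker 0 (by simp)
    simp only [Pi.zero_apply, zero_mul, sum_const_zero, AddChar.map_zero_eq_one, mul_one] at h0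
    exact_mod_cast h0
  obtain ⟨c₀, hc₀, hpos⟩ := exists_pos_of_sum_zero_of_exists_nonzero m hsum hm
  obtain ⟨c₁, hc₁, hneg⟩ := exists_pos_of_sum_zero_of_exists_nonzero (s := C) (-m)
    (by simp [hsum]) (by simpa using hm)
  set P := ∑ c ∈ C with 0 < m c, m c
  have hP : 0 < P := sum_pos (fun c hc => (mem_filter.1 hc).2) ⟨c₀, mem_filter.2 ⟨hc₀, hpos⟩⟩
  have hbalance (g : (Fin n → ZMod q) → ℂ) (hg : ∑ c ∈ C, (m c : ℂ) * g c = 0) :=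
    sum_filter_pos_sqrt_mul_self_eq_sum_filter_neg C hP.le hg
  have hnorm : ∑ c ∈ C with 0 < m c, √(m c / P) * √(m c / P) = 1 := by
    rw [sum_congr rfl fun c hc => Real.mul_self_sqrt (div_nonneg (mem_filter.1 hc).2.le hP.le),
      ← sum_div, div_self hP.ne']
  have hnorm' : ∑ c ∈ C with m c < 0, √(-m c / P) * √(-m c / P) = 1 := by
    have := hbalance 1 (by simpa using congrArg ((↑) : ℝ → ℂ) hsum)
    simp only [Pi.one_apply, mul_one] at this
    rw [← hnorm]
    exact_mod_cast this.symm
  have hdisj : Disjoint {c ∈ C | 0 < m c} {c ∈ C | m c < 0} :=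
    disjoint_filter.2 fun c _ (h : 0 < m c) h' => h.not_gt h'
  refine ⟨_, _, filter_subset _ C, filter_subset _ C, hdisj, ⟨c₀, mem_filter.2 ⟨hc₀, hpos⟩⟩,
    ⟨c₁, mem_filter.2 ⟨hc₁, by simpa using hneg⟩⟩, fun c => √(m c / P), fun c => √(-m c / P),
    fun _ _ => Real.sqrt_nonneg _, fun _ _ => Real.sqrt_nonneg _, by simpa [sq] using hnorm,
    by simpa [sq] using hnorm', _, _, rfl, rfl, fun a b ha hb => ?_⟩
  rw [inner_sum_single_pauliXZ_sum_single hC (filter_subset _ C) (filter_subset _ C) _ _ ha,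
    inner_sum_single_pauliXZ_sum_single hC (filter_subset _ C) (filter_subset _ C) _ _ ha,
    inner_sum_single_pauliXZ_sum_single hC (filter_subset _ C) (filter_subset _ C) _ _ ha,
    disjoint_iff_inter_eq_empty.1 hdisj, inter_self, inter_self, sum_empty, ite_self]
  exact ⟨rfl, by split_ifs; exacts [hbalance _ (hker b hb), rfl]⟩

end Pauli

theorem stmt_19_general (s t n : ℕ) (hs : 1 ≤ s) (q : ℕ) (hq : q = 2 * s + 1) [NeZero q]
    (hcard : 2 * hammingBallVol n 2 (2 * t) * hammingBallVol n q (2 * t) ≤ 2 ^ n) :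
    ∃ C : Finset (Fin n → ZMod q),
      (∀ c ∈ C, ∀ i : Fin n, c i = 1 ∨ c i = 2) ∧
      ∃ C0 C1 : Finset (Fin n → ZMod q), C0 ⊆ C ∧ C1 ⊆ C ∧ Disjoint C0 C1 ∧
        C0.Nonempty ∧ C1.Nonempty ∧
        ∃ α β : (Fin n → ZMod q) → ℝ,
          (∀ c ∈ C0, 0 ≤ α c) ∧ (∀ c ∈ C1, 0 ≤ β c) ∧
          (∑ c ∈ C0, (α c) ^ 2 = 1) ∧ (∑ c ∈ C1, (β c) ^ 2 = 1) ∧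
          ∃ ψ0 ψ1 : EuclideanSpace ℂ (Fin n → ZMod q),
            ψ0 = ∑ c ∈ C0, ((α c : ℝ) : ℂ) • EuclideanSpace.single c (1 : ℂ) ∧
            ψ1 = ∑ c ∈ C1, ((β c : ℝ) : ℂ) • EuclideanSpace.single c (1 : ℂ) ∧
            ∀ a b : Fin n → ZMod q,
              hammingNorm a ≤ 2 * t → hammingNorm b ≤ 2 * t →
                (inner ℂ ψ0 (pauliXZ n q a b ψ1) : ℂ) = 0 ∧
                (inner ℂ ψ0 (pauliXZ n q a b ψ0) : ℂ) = inner ℂ ψ1 (pauliXZ n q a b ψ1) := by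
  obtain ⟨C, hletters, hCsep, hCcard⟩ :=
    exists_two_letter_separated_card_pow_le (ZMod.one_ne_two_of_two_lt (by omega : 2 < q)) n (2 * t)
  have hB : #{b : Fin n → ZMod q | hammingDist b 0 ≤ 2 * t} < #C := by
    have hVq : #{b : Fin n → ZMod q | hammingDist b 0 ≤ 2 * t} ≤ hammingBallVol n q (2 * t) := by
      simpa using card_hammingBall_le (0 : Fin n → ZMod q) (2 * t)
    nlinarith [hammingBallVol_pos n 2 (2 * t), hammingBallVol_pos n q (2 * t)]
  obtain ⟨m, hm, hker⟩ := exists_real_ne_zero_sum_mul_eq_zero C _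
    (fun b c => ZMod.stdAddChar (∑ i, b i * c i)) (fun b hb => ⟨-b, by simpa [hammingNorm] using hb,
      fun c => by simp [AddChar.map_neg_eq_conj]⟩) hB
  exact ⟨C, hletters, exists_knillLaflamme_states_of_separated hCsep m hm
    fun b hb => hker b (mem_filter.2 ⟨mem_univ _, hb⟩)⟩

/-- Finite core of the linear-distance ground-space code theorem. -/
theorem stmt_19 (s t n : ℕ) (hs : 1 ≤ s) (ht : 1 ≤ t) (hn : 1 ≤ n)
    (htn : 2 * t + 1 ≤ n) (q : ℕ) (hq : q = 2 * s + 1) [NeZero q]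
    (hcard : 2 * hammingBallVol n 2 (2 * t) * hammingBallVol n q (2 * t) ≤ 2 ^ n) :
    ∃ C : Finset (Fin n → ZMod q),
      (∀ c ∈ C, ∀ i : Fin n, c i = 1 ∨ c i = 2) ∧
      ∃ C0 C1 : Finset (Fin n → ZMod q), C0 ⊆ C ∧ C1 ⊆ C ∧ Disjoint C0 C1 ∧
        C0.Nonempty ∧ C1.Nonempty ∧
        ∃ α β : (Fin n → ZMod q) → ℝ,
          (∀ c ∈ C0, 0 ≤ α c) ∧ (∀ c ∈ C1, 0 ≤ β c) ∧
          (∑ c ∈ C0, (α c) ^ 2 = 1) ∧ (∑ c ∈ C1, (β c) ^ 2 = 1) ∧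
          ∃ ψ0 ψ1 : EuclideanSpace ℂ (Fin n → ZMod q),
            ψ0 = ∑ c ∈ C0, ((α c : ℝ) : ℂ) • EuclideanSpace.single c (1 : ℂ) ∧
            ψ1 = ∑ c ∈ C1, ((β c : ℝ) : ℂ) • EuclideanSpace.single c (1 : ℂ) ∧
            ∀ a b : Fin n → ZMod q,
              hammingNorm a ≤ 2 * t → hammingNorm b ≤ 2 * t →
                (inner ℂ ψ0 (pauliXZ n q a b ψ1) : ℂ) = 0 ∧
                (inner ℂ ψ0 (pauliXZ n q a b ψ0) : ℂ) = inner ℂ ψ1 (pauliXZ n q a b ψ1) :=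
  stmt_19_general s t n hs q hq hcard
end
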